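/- arXiv:2604.12495 — 6 statements merged into one kernel-verified Lean document; each statement's English description precedes it below -/
import Mathlib

section
/- Let n ≥ 2 and let (ω_α) be an orthonormal basis of the space so(n) of skew-symmetric endomorphisms of ℝⁿ with respect to the inner product ⟨ξ, η⟩ = −(1/2)·Tr(ξ ∘ η). Then for every Ω ∈ so(n), the sum Σ_α ω_α ∘ [Ω, ω_α] equals (n − 2)·Ω. -/
open scoped RealInnerProductSpace

/-- The skew-symmetric endomorphism `x ∧ y : z ↦ ⟨x,z⟩ y − ⟨y,z⟩ x`. -/
noncomputable def wedge {V : Type*} [NormedAddCommGroup V] [InnerProductSpace ℝ V]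
    (x y : V) : V →L[ℝ] V :=
  ((innerSL ℝ x).smulRight y) - ((innerSL ℝ y).smulRight x)

/-- `ξ` is a skew-symmetric endomorphism. -/
def IsSkew {V : Type*} [NormedAddCommGroup V] [InnerProductSpace ℝ V]
    (ξ : V →L[ℝ] V) : Prop :=
  ∀ u v : V, ⟪ξ u, v⟫ = -⟪u, ξ v⟫

/-- The inner product `⟨ξ, η⟩ = -(1/2) Tr (ξ ∘ η)` on (skew-symmetric) endomorphisms. -/
noncomputable def trIP {V : Type*} [NormedAddCommGroup V] [InnerProductSpace ℝ V]
    (ξ η : V →L[ℝ] V) : ℝ :=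
  -(1/2) * LinearMap.trace ℝ V (ξ.comp η).toLinearMap

namespace Aux
variable {n : ℕ}
abbrev Vn (n : ℕ) := EuclideanSpace ℝ (Fin n)
noncomputable def e (n : ℕ) (i : Fin n) : Vn n := EuclideanSpace.single i (1:ℝ)

lemma sum_coord {α : Type*} [DecidableEq α] (s : Finset α) (f : α → Vn n) (j : Fin n) :
    (∑ i ∈ s, f i) j = ∑ i ∈ s, f i j := by
  induction s using Finset.induction with
  | empty => rfl
  | insert _ _ h ih => rw [Finset.sum_insert h, Finset.sum_insert h, ← ih]; rfl

lemma inner_e (x : Vn n) (i : Fin n) : ⟪x, e n i⟫ = x i := by simp [e, EuclideanSpace.inner_single_right]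

lemma inner_eq_sum (x y : Vn n) : ⟪x, y⟫ = ∑ i, x i * y i := by
  simp [PiLp.inner_apply, RCLike.inner_apply]
  exact Finset.sum_congr rfl fun i _ => mul_comm _ _

lemma decomp (x : Vn n) : ∑ i, x i • e n i = x := by
  ext j
  rw [sum_coord]
  simp [e, EuclideanSpace.single_apply]

lemma trace_clm (f : Vn n →L[ℝ] Vn n) :
    LinearMap.trace ℝ (Vn n) f.toLinearMap = ∑ i, f (e n i) i := by
  rw [LinearMap.trace_eq_matrix_trace ℝ (EuclideanSpace.basisFun (Fin n) ℝ).toBasis]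
  simp [Matrix.trace, Matrix.diag, LinearMap.toMatrix_apply, e]

lemma wedge_apply (u v w : Vn n) : wedge u v w = ⟪u,w⟫ • v - ⟪v,w⟫ • u := by
  simp [wedge]

lemma wedge_skew (u v : Vn n) : IsSkew (wedge u v) := by
  intro w z
  simp only [wedge_apply, inner_sub_left, inner_sub_right, real_inner_smul_left,
    real_inner_smul_right]
  rw [real_inner_comm w u, real_inner_comm w v]
  ring

/-- apply an endomorphism through coordinates -/
lemma apply_coord (f : Vn n →L[ℝ] Vn n) (x : Vn n) :
    f x = ∑ j, x j • f (e n j) := by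
  conv_lhs => rw [← decomp x]
  rw [map_sum]
  simp

/-- trIP of wedge with a skew operator -/
lemma trIP_wedge (u v : Vn n) (η : Vn n →L[ℝ] Vn n) (hη : IsSkew η) :
    trIP (wedge u v) η = ⟪η u, v⟫ := by
  have h1 : ∀ i, (wedge u v) (η (e n i)) i = ⟪u, η (e n i)⟫ * v i - ⟪v, η (e n i)⟫ * u i := by
    intro i
    rw [wedge_apply]
    simp [smul_eq_mul]
  have h2 : ∑ i, ⟪u, η (e n i)⟫ * v i = ⟪u, η v⟫ := by
    conv_rhs => rw [← decomp v, map_sum, inner_sum]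
    simp [real_inner_smul_right, Finset.mul_sum, mul_comm, mul_left_comm]
  have h3 : ∑ i, ⟪v, η (e n i)⟫ * u i = ⟪v, η u⟫ := by
    conv_rhs => rw [← decomp u, map_sum, inner_sum]
    simp [real_inner_smul_right, Finset.mul_sum, mul_comm, mul_left_comm]
  rw [trIP, trace_clm]
  simp only [ContinuousLinearMap.comp_apply, h1, Finset.sum_sub_distrib, h2, h3]
  have h4 : ⟪u, η v⟫ = -⟪η u, v⟫ := by linarith [hη u v]
  have h5 : ⟪v, η u⟫ = ⟪η u, v⟫ := real_inner_comm _ _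
  rw [h4, h5]; ring


section Star
variable {n d : ℕ} (ω : Fin d → (Vn n →L[ℝ] Vn n))

/-- trIP is additive/homogeneous enough in the first slot. -/
lemma trIP_sum_smul_left (c : Fin d → ℝ) (η : Vn n →L[ℝ] Vn n) :
    trIP (∑ a, c a • ω a) η = ∑ a, c a * trIP (ω a) η := by
  have hcomp : (∑ a, c a • ω a).comp η = ∑ a, c a • ((ω a).comp η) := by
    ext x
    simp [ContinuousLinearMap.sum_apply, ContinuousLinearMap.comp_apply, sum_coord]
  rw [trIP, hcomp]
  push_cast [ContinuousLinearMap.coe_sum, ContinuousLinearMap.coe_smul]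
  rw [map_sum]
  simp only [map_smul, smul_eq_mul, Finset.mul_sum, trIP]
  exact Finset.sum_congr rfl fun a _ => by rw [show ((ω a).comp η : Vn n →ₗ[ℝ] Vn n) = (ω a : Vn n →ₗ[ℝ] Vn n).comp (η : Vn n →ₗ[ℝ] Vn n) from rfl]; ring

/-- the reproducing identity (★) -/
lemma star (hskew : ∀ a, IsSkew (ω a))
    (horth : ∀ a b, trIP (ω a) (ω b) = if a = b then 1 else 0)
    (hspan : ∀ ξ : Vn n →L[ℝ] Vn n, IsSkew ξ → ξ ∈ Submodule.span ℝ (Set.range ω))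
    (u v : Vn n) :
    ∑ a, ⟪(ω a) u, v⟫ • ω a = wedge u v := by
  obtain ⟨c, hc⟩ := Submodule.mem_span_range_iff_exists_fun ℝ |>.mp (hspan _ (wedge_skew u v))
  have hcb : ∀ b, c b = ⟪(ω b) u, v⟫ := by
    intro b
    have := trIP_sum_smul_left ω c (ω b)
    rw [hc, trIP_wedge u v (ω b) (hskew b)] at this
    simp only [horth, mul_ite, mul_one, mul_zero, Finset.sum_ite_eq', Finset.mem_univ,
      if_true] at this
    exact this.symm
  rw [← hc]
  exact Finset.sum_congr rfl fun a _ => by rw [hcb a]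

/-- the scalar identity (★★) -/
lemma starstar (hskew : ∀ a, IsSkew (ω a))
    (horth : ∀ a b, trIP (ω a) (ω b) = if a = b then 1 else 0)
    (hspan : ∀ ξ : Vn n →L[ℝ] Vn n, IsSkew ξ → ξ ∈ Submodule.span ℝ (Set.range ω))
    (u v w z : Vn n) :
    ∑ a, ⟪(ω a) u, v⟫ * ⟪(ω a) w, z⟫ = ⟪u,w⟫ * ⟪v,z⟫ - ⟪v,w⟫ * ⟪u,z⟫ := by
  have h := congrArg (fun f : Vn n →L[ℝ] Vn n => ⟪f w, z⟫) (star ω hskew horth hspan u v)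
  simp only [ContinuousLinearMap.sum_apply, ContinuousLinearMap.smul_apply] at h
  rw [wedge_apply] at h
  have hl : ⟪∑ a, ⟪(ω a) u, v⟫ • (ω a) w, z⟫ = ∑ a, ⟪(ω a) u, v⟫ * ⟪(ω a) w, z⟫ := by
    rw [sum_inner]
    exact Finset.sum_congr rfl fun a _ => real_inner_smul_left _ _ _
  rw [hl] at h
  rw [h, inner_sub_left, real_inner_smul_left, real_inner_smul_left]

lemma e_self (i : Fin n) : ⟪e n i, e n i⟫ = (1:ℝ) := by
  rw [inner_e]; simp [e, EuclideanSpace.single_apply]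

lemma e_inner_left (x : Vn n) (i : Fin n) : ⟪e n i, x⟫ = x i := by
  rw [real_inner_comm, inner_e]

/-- second term: `∑ a ⟪ω_a ω_a x, v⟫ = -(n-1)⟪x,v⟫`. -/
lemma termB (hskew : ∀ a, IsSkew (ω a))
    (horth : ∀ a b, trIP (ω a) (ω b) = if a = b then 1 else 0)
    (hspan : ∀ ξ : Vn n →L[ℝ] Vn n, IsSkew ξ → ξ ∈ Submodule.span ℝ (Set.range ω))
    (x v : Vn n) :
    ∑ a, ⟪(ω a) ((ω a) x), v⟫ = -((n:ℝ) - 1) * ⟪x, v⟫ := by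
  have h1 : ∀ a, ⟪(ω a) ((ω a) x), v⟫ = -⟪(ω a) x, (ω a) v⟫ := fun a => hskew a _ _
  have h2 : ∀ a, ⟪(ω a) x, (ω a) v⟫ = ∑ i, ⟪(ω a) x, e n i⟫ * ⟪(ω a) v, e n i⟫ := by
    intro a; rw [inner_eq_sum]
    exact Finset.sum_congr rfl fun i _ => by rw [inner_e, inner_e]
  calc ∑ a, ⟪(ω a) ((ω a) x), v⟫
      = -∑ a, ∑ i, ⟪(ω a) x, e n i⟫ * ⟪(ω a) v, e n i⟫ := by
        simp only [h1, h2]; rw [Finset.sum_neg_distrib]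
    _ = -∑ i, ∑ a, ⟪(ω a) x, e n i⟫ * ⟪(ω a) v, e n i⟫ := by rw [Finset.sum_comm]
    _ = -∑ i : Fin n, (⟪x, v⟫ * ⟪e n i, e n i⟫ - ⟪e n i, v⟫ * ⟪x, e n i⟫) := by
        congr 1
        exact Finset.sum_congr rfl fun i _ => starstar ω hskew horth hspan x (e n i) v (e n i)
    _ = -((n:ℝ) * ⟪x, v⟫ - ⟪x, v⟫) := by
        have hA : ∑ i : Fin n, ⟪x, v⟫ * ⟪e n i, e n i⟫ = (n:ℝ) * ⟪x, v⟫ := by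
          simp only [e_self, mul_one, Finset.sum_const, Finset.card_univ, Fintype.card_fin,
            nsmul_eq_mul]
        have hB : ∑ i : Fin n, ⟪e n i, v⟫ * ⟪x, e n i⟫ = ⟪x, v⟫ := by
          rw [inner_eq_sum x v]
          exact Finset.sum_congr rfl fun i _ => by rw [e_inner_left, inner_e]; ring
        rw [Finset.sum_sub_distrib, hA, hB]
    _ = -((n:ℝ) - 1) * ⟪x, v⟫ := by ring

/-- coordinates of `Ω y`. -/
lemma coordΩ (Ω : Vn n →L[ℝ] Vn n) (y : Vn n) (i : Fin n) :
    Ω y i = ∑ j, (Ω (e n j)) i * y j := by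
  conv_lhs => rw [apply_coord Ω y]
  rw [sum_coord]
  exact Finset.sum_congr rfl fun j _ => by simp [mul_comm]

lemma diag_zero (Ω : Vn n →L[ℝ] Vn n) (hΩ : IsSkew Ω) (i : Fin n) : (Ω (e n i)) i = 0 := by
  have h := hΩ (e n i) (e n i)
  rw [inner_e, real_inner_comm, inner_e] at h
  linarith

/-- first term: `∑ a ⟪ω_a Ω ω_a u, v⟫ = -⟪Ω u, v⟫`. -/
lemma termA (hskew : ∀ a, IsSkew (ω a))
    (horth : ∀ a b, trIP (ω a) (ω b) = if a = b then 1 else 0)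
    (hspan : ∀ ξ : Vn n →L[ℝ] Vn n, IsSkew ξ → ξ ∈ Submodule.span ℝ (Set.range ω))
    (Ω : Vn n →L[ℝ] Vn n) (hΩ : IsSkew Ω) (u v : Vn n) :
    ∑ a, ⟪(ω a) (Ω ((ω a) u)), v⟫ = -⟪Ω u, v⟫ := by
  have h1 : ∀ a, ⟪(ω a) (Ω ((ω a) u)), v⟫ = -⟪Ω ((ω a) u), (ω a) v⟫ := fun a => hskew a _ _
  have h2 : ∀ a, ⟪Ω ((ω a) u), (ω a) v⟫
      = ∑ i, ∑ j, (Ω (e n j)) i * (⟪(ω a) u, e n j⟫ * ⟪(ω a) v, e n i⟫) := by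
    intro a
    rw [inner_eq_sum]
    refine Finset.sum_congr rfl fun i _ => ?_
    rw [coordΩ Ω _ i, Finset.sum_mul]
    exact Finset.sum_congr rfl fun j _ => by rw [inner_e, inner_e]; ring
  have h3 : ∑ a, ⟪Ω ((ω a) u), (ω a) v⟫ = ⟪Ω u, v⟫ := by
    calc ∑ a, ⟪Ω ((ω a) u), (ω a) v⟫
        = ∑ i, ∑ j, (Ω (e n j)) i * (∑ a, ⟪(ω a) u, e n j⟫ * ⟪(ω a) v, e n i⟫) := by
          simp only [h2]
          rw [Finset.sum_comm]
          refine Finset.sum_congr rfl fun i _ => ?_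
          rw [Finset.sum_comm]
          refine Finset.sum_congr rfl fun j _ => ?_
          rw [Finset.mul_sum]
      _ = ∑ i, ∑ j, (Ω (e n j)) i *
            (⟪u, v⟫ * ⟪e n j, e n i⟫ - ⟪e n j, v⟫ * ⟪u, e n i⟫) := by
          refine Finset.sum_congr rfl fun i _ => Finset.sum_congr rfl fun j _ => ?_
          rw [starstar ω hskew horth hspan u (e n j) v (e n i)]
      _ = ∑ i, ∑ j, ((Ω (e n j)) i * ⟪u, v⟫ * ⟪e n j, e n i⟫
            - (Ω (e n j)) i * (v j * u i)) := by
          refine Finset.sum_congr rfl fun i _ => Finset.sum_congr rfl fun j _ => ?_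
          rw [show (⟪e n j, v⟫:ℝ) = v j from e_inner_left v j, inner_e u i]; ring
      _ = ∑ i, ((Ω (e n i)) i * ⟪u, v⟫ - (Ω v) i * u i) := by
          refine Finset.sum_congr rfl fun i _ => ?_
          rw [Finset.sum_sub_distrib]
          congr 1
          · have : ∀ j : Fin n, (⟪e n j, e n i⟫ : ℝ) = if j = i then 1 else 0 := by
              intro j
              rw [e_inner_left]
              simp [e, EuclideanSpace.single_apply, eq_comm]
            simp only [this, mul_ite, mul_one, mul_zero, Finset.sum_ite_eq',
              Finset.mem_univ, if_true]
          · rw [coordΩ Ω v i, Finset.sum_mul]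
            exact Finset.sum_congr rfl fun j _ => by ring
      _ = ⟪Ω u, v⟫ := by
          rw [Finset.sum_sub_distrib]
          have hd : ∑ i, (Ω (e n i)) i * ⟪u, v⟫ = 0 := by
            simp [diag_zero Ω hΩ]
          have hv : ∑ i, (Ω v) i * u i = -⟪Ω u, v⟫ := by
            have h5 : ⟪Ω v, u⟫ = -⟪Ω u, v⟫ := by
              rw [hΩ v u, real_inner_comm]
            rw [← h5, inner_eq_sum]
          rw [hd, hv]; ring
  simp only [h1, Finset.sum_neg_distrib, h3]

end Star
end Aux

/-- Let `(ω_α)` be an orthonormal basis of `so(n)` (skew-symmetric endomorphisms of `ℝⁿ`)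
for `⟨ξ, η⟩ = -(1/2) Tr(ξ ∘ η)`. Then for every skew `Ω`, `Σ_α ω_α ∘ [Ω, ω_α] = (n-2) Ω`. -/
theorem sum_basis_bracket (n : ℕ) (hn : 2 ≤ n) (d : ℕ)
    (ω : Fin d → (EuclideanSpace ℝ (Fin n) →L[ℝ] EuclideanSpace ℝ (Fin n)))
    (hskew : ∀ a, IsSkew (ω a))
    (horth : ∀ a b, trIP (ω a) (ω b) = if a = b then 1 else 0)
    (hspan : ∀ ξ : EuclideanSpace ℝ (Fin n) →L[ℝ] EuclideanSpace ℝ (Fin n),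
      IsSkew ξ → ξ ∈ Submodule.span ℝ (Set.range ω))
    (Ω : EuclideanSpace ℝ (Fin n) →L[ℝ] EuclideanSpace ℝ (Fin n)) (hΩ : IsSkew Ω) :
    ∑ a : Fin d, (ω a).comp (Ω.comp (ω a) - (ω a).comp Ω) = ((n : ℝ) - 2) • Ω := by

  refine ContinuousLinearMap.ext fun u => ?_
  refine ext_inner_right ℝ fun v => ?_
  have lhs : ⟪(∑ a : Fin d, (ω a).comp (Ω.comp (ω a) - (ω a).comp Ω)) u, v⟫
      = ∑ a : Fin d, (⟪(ω a) (Ω ((ω a) u)), v⟫ - ⟪(ω a) ((ω a) (Ω u)), v⟫) := by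
    rw [ContinuousLinearMap.sum_apply, sum_inner]
    refine Finset.sum_congr rfl fun a _ => ?_
    have : ((ω a).comp (Ω.comp (ω a) - (ω a).comp Ω)) u
        = (ω a) (Ω ((ω a) u)) - (ω a) ((ω a) (Ω u)) := by
      simp only [ContinuousLinearMap.comp_apply, ContinuousLinearMap.sub_apply, map_sub]
    rw [this, inner_sub_left]
  rw [lhs, Finset.sum_sub_distrib,
    Aux.termA ω hskew horth hspan Ω hΩ u v,
    Aux.termB ω hskew horth hspan (Ω u) v]
  rw [ContinuousLinearMap.smul_apply, real_inner_smul_left]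
  ring
end

section
/- Let Ω be a skew-symmetric endomorphism of ℝⁿ, let e₁ be a unit vector, and define Ω⁰ = (1/2)(Ω − e₁ ∧ Ω e₁) and, for x ∈ ℝⁿ, T_x = −⟨x, e₁⟩ Ω⁰ + (1/2)((Ω e₁) ∧ x − e₁ ∧ (Ω x)). Then for all x, y ∈ ℝⁿ, T_x y − T_y x = −(1/2)·P((x ∧ y)(Ω e₁)) + ⟨Ω x, y⟩ e₁, where P denotes the orthogonal projection onto the hyperplane e₁^⊥, i.e. P(u) = u − ⟨u, e₁⟩ e₁. -/
open scoped RealInnerProductSpace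

/-- `Ω⁰ = (1/2)(Ω − e₁ ∧ Ω e₁)`. -/
noncomputable def Omega0 {V : Type*} [NormedAddCommGroup V] [InnerProductSpace ℝ V]
    (Ω : V →L[ℝ] V) (e₁ : V) : V →L[ℝ] V :=
  (1/2 : ℝ) • (Ω - wedge e₁ (Ω e₁))

/-- The magnetic contorsion tensor
`T_x = −⟨x, e₁⟩ Ω⁰ + (1/2)((Ω e₁) ∧ x − e₁ ∧ (Ω x))`. -/
noncomputable def conT {V : Type*} [NormedAddCommGroup V] [InnerProductSpace ℝ V]
    (Ω : V →L[ℝ] V) (e₁ : V) (x : V) : V →L[ℝ] V :=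
  -(⟪x, e₁⟫ • Omega0 Ω e₁) + (1/2 : ℝ) • (wedge (Ω e₁) x - wedge e₁ (Ω x))

/-- The torsion formula: `T_x y − T_y x = −(1/2) P((x ∧ y)(Ω e₁)) + ⟨Ω x, y⟩ e₁`, where
`P u = u − ⟨u, e₁⟩ e₁` is the orthogonal projection onto `e₁^⊥`. -/
theorem contorsion_torsion {V : Type*} [NormedAddCommGroup V] [InnerProductSpace ℝ V]
    (Ω : V →L[ℝ] V) (hΩ : IsSkew Ω) (e₁ : V) (he : ‖e₁‖ = 1) (x y : V) :
    conT Ω e₁ x y - conT Ω e₁ y x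
      = -(1/2 : ℝ) • ((wedge x y) (Ω e₁) - ⟪(wedge x y) (Ω e₁), e₁⟫ • e₁)
          + ⟪Ω x, y⟫ • e₁ := by
  have he2 : ⟪e₁, e₁⟫ = 1 := by
    rw [real_inner_self_eq_norm_sq, he]; norm_num
  have h0 : ⟪e₁, Ω e₁⟫ = 0 := by
    have := hΩ e₁ e₁; rw [real_inner_comm] at this; linarith
  have hAx : ⟪e₁, Ω x⟫ = -⟪x, Ω e₁⟫ := by rw [real_inner_comm, hΩ]
  have hAy : ⟪e₁, Ω y⟫ = -⟪y, Ω e₁⟫ := by rw [real_inner_comm, hΩ]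
  simp only [conT, Omega0, wedge, ContinuousLinearMap.add_apply,
    ContinuousLinearMap.sub_apply, ContinuousLinearMap.neg_apply,
    ContinuousLinearMap.smul_apply, ContinuousLinearMap.smulRight_apply,
    innerSL_apply_apply, inner_sub_left, real_inner_smul_left, smul_sub, smul_add,
    smul_smul, smul_neg, neg_smul]
  have hxy2 : ⟪y, Ω x⟫ = -⟪x, Ω y⟫ := by rw [real_inner_comm, hΩ]
  have hsk : ∀ u v : V, ⟪Ω u, v⟫ = -⟪u, Ω v⟫ := hΩ
  simp only [hsk, hxy2, hAx, hAy, h0, he2, real_inner_comm y x, real_inner_comm x e₁, real_inner_comm y e₁]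
  module
end

section
/- Let Ω be a skew-symmetric endomorphism of ℝⁿ, e₁ a unit vector, and for x ∈ ℝⁿ set T_x = −⟨x, e₁⟩ Ω⁰ + (1/2)((Ω e₁) ∧ x − e₁ ∧ (Ω x)), where Ω⁰ = (1/2)(Ω − e₁ ∧ Ω e₁). Then the torsion satisfies the special case: for all y ∈ ℝⁿ, T_{e₁} y − T_y e₁ = ⟨Ω e₁, y⟩ e₁. -/
open scoped RealInnerProductSpace

/-- Special case of the torsion: `T_{e₁} y − T_y e₁ = ⟨Ω e₁, y⟩ e₁`. -/
theorem contorsion_torsion_e1 {V : Type*} [NormedAddCommGroup V] [InnerProductSpace ℝ V]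
    (Ω : V →L[ℝ] V) (hΩ : IsSkew Ω) (e₁ : V) (he : ‖e₁‖ = 1) (y : V) :
    conT Ω e₁ e₁ y - conT Ω e₁ y e₁ = ⟪Ω e₁, y⟫ • e₁ := by
  have he1 : ⟪e₁, e₁⟫ = 1 := by
    rw [real_inner_self_eq_norm_sq, he]; norm_num
  have h1 : ⟪Ω e₁, e₁⟫ = 0 := by
    have h := hΩ e₁ e₁
    have hc : ⟪Ω e₁, e₁⟫ = ⟪e₁, Ω e₁⟫ := real_inner_comm _ _
    linarith
  have h2 : ⟪Ω y, e₁⟫ = -⟪y, Ω e₁⟫ := hΩ y e₁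
  have h3 : ⟪y, Ω e₁⟫ = ⟪Ω e₁, y⟫ := real_inner_comm _ _
  simp only [conT, Omega0, wedge, ContinuousLinearMap.sub_apply,
    ContinuousLinearMap.add_apply, ContinuousLinearMap.smul_apply,
    ContinuousLinearMap.neg_apply, ContinuousLinearMap.smulRight_apply,
    innerSL_apply_apply, h1, h2, h3, he1, real_inner_comm e₁ y]
  module
end

section
/- Let Ω be a skew-symmetric endomorphism of ℝⁿ, e₁ a unit vector, and y ∈ ℝⁿ with y ⊥ e₁. Set T_y = (1/2)((Ω e₁) ∧ y − e₁ ∧ (Ω y)). Then the commutator of skew endomorphisms satisfies [e₁ ∧ Ω e₁, T_y] = ⟨Ω e₁, y⟩ (e₁ ∧ Ω e₁) − (1/2)‖Ω e₁‖² (e₁ ∧ y) − (1/2)(Ω e₁) ∧ (Ω y). -/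
open scoped RealInnerProductSpace

/-- For `Ω` skew-symmetric, `e₁` a unit vector and `y ⊥ e₁`, with
`T_y = (1/2)((Ω e₁) ∧ y − e₁ ∧ (Ω y))`, one has
`[e₁ ∧ Ω e₁, T_y] = ⟨Ω e₁, y⟩ (e₁ ∧ Ω e₁) − (1/2)‖Ω e₁‖² (e₁ ∧ y) − (1/2)(Ω e₁) ∧ (Ω y)`. -/
theorem bracket_wedge_contorsion {V : Type*} [NormedAddCommGroup V] [InnerProductSpace ℝ V]
    (Ω : V →L[ℝ] V) (hΩ : IsSkew Ω) (e₁ : V) (he : ‖e₁‖ = 1) (y : V) (hy : ⟪y, e₁⟫ = 0) :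
    (wedge e₁ (Ω e₁)).comp ((1/2 : ℝ) • (wedge (Ω e₁) y - wedge e₁ (Ω y)))
        - ((1/2 : ℝ) • (wedge (Ω e₁) y - wedge e₁ (Ω y))).comp (wedge e₁ (Ω e₁))
      = ⟪Ω e₁, y⟫ • wedge e₁ (Ω e₁) - ((1/2 : ℝ) * ‖Ω e₁‖ ^ 2) • wedge e₁ y
          - (1/2 : ℝ) • wedge (Ω e₁) (Ω y) := by
  have h1 : ⟪e₁, e₁⟫ = 1 := by
    rw [real_inner_self_eq_norm_sq, he]; norm_num
  have h2 : ⟪e₁, Ω e₁⟫ = 0 := by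
    have := hΩ e₁ e₁
    have h := real_inner_comm (Ω e₁) e₁
    linarith [h ▸ this]
  have h3 : ⟪e₁, Ω y⟫ = -⟪Ω e₁, y⟫ := by
    have := hΩ e₁ y; linarith [this]
  have h4 : ⟪Ω e₁, e₁⟫ = 0 := by rw [real_inner_comm]; exact h2
  have h5 : ⟪Ω y, e₁⟫ = -⟪Ω e₁, y⟫ := by rw [real_inner_comm]; exact h3
  have h6 : ⟪y, Ω e₁⟫ = ⟪Ω e₁, y⟫ := real_inner_comm _ _
  have h7 : (‖Ω e₁‖:ℝ)^2 = ⟪Ω e₁, Ω e₁⟫ := (real_inner_self_eq_norm_sq _).symm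
  have h8 : ⟪Ω y, Ω e₁⟫ = ⟪Ω e₁, Ω y⟫ := real_inner_comm _ _
  ext z
  simp only [wedge, ContinuousLinearMap.coe_comp', ContinuousLinearMap.coe_sub',
    ContinuousLinearMap.coe_smul', Pi.sub_apply, Pi.smul_apply, Function.comp_apply,
    ContinuousLinearMap.smulRight_apply, coe_innerSL_apply, innerSL_apply_apply,
    ContinuousLinearMap.sub_apply, ContinuousLinearMap.add_apply, map_sub, map_add, map_smul,
    inner_sub_right, inner_add_right, real_inner_smul_right, smul_sub, smul_smul, smul_add]
  rw [h1, h2, h3, h4, h5, h6, h7, h8]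
  have hyz : ⟪e₁, y⟫ = 0 := by rw [real_inner_comm]; exact hy
  rw [hy, hyz]
  module
end

section
/- Let Ω be a skew-symmetric endomorphism of ℝⁿ, e₁ a unit vector, P the orthogonal projection onto e₁^⊥. Then for all x, y, z ∈ ℝⁿ, the cyclic sum over (x, y, z) of (P(Ω²x) ∧ y + x ∧ P(Ω²y))(z) equals the cyclic sum over (x, y, z) of ⟨x ∧ z, e₁ ∧ Ω²e₁⟩ y, where the inner product on wedges is ⟨a ∧ b, c ∧ d⟩ = ⟨a, c⟩⟨b, d⟩ − ⟨a, d⟩⟨b, c⟩. -/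
open scoped RealInnerProductSpace

/-- With `P` the orthogonal projection onto `e₁^⊥` and `Ω` skew-symmetric, the cyclic sum of
`(P(Ω²x) ∧ y + x ∧ P(Ω²y))(z)` equals the cyclic sum of `⟨x ∧ z, e₁ ∧ Ω²e₁⟩ y`, where
`⟨a ∧ b, c ∧ d⟩ = ⟨a, c⟩⟨b, d⟩ − ⟨a, d⟩⟨b, c⟩`. -/
theorem cyclic_wedge_omega_sq {V : Type*} [NormedAddCommGroup V] [InnerProductSpace ℝ V]
    (Ω : V →L[ℝ] V) (hΩ : IsSkew Ω) (e₁ : V) (he : ‖e₁‖ = 1) (x y z : V) :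
    (wedge (Ω (Ω x) - ⟪Ω (Ω x), e₁⟫ • e₁) y + wedge x (Ω (Ω y) - ⟪Ω (Ω y), e₁⟫ • e₁)) z
        + (wedge (Ω (Ω y) - ⟪Ω (Ω y), e₁⟫ • e₁) z + wedge y (Ω (Ω z) - ⟪Ω (Ω z), e₁⟫ • e₁)) x
        + (wedge (Ω (Ω z) - ⟪Ω (Ω z), e₁⟫ • e₁) x + wedge z (Ω (Ω x) - ⟪Ω (Ω x), e₁⟫ • e₁)) y
      = (⟪x, e₁⟫ * ⟪z, Ω (Ω e₁)⟫ - ⟪x, Ω (Ω e₁)⟫ * ⟪z, e₁⟫) • y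
          + (⟪y, e₁⟫ * ⟪x, Ω (Ω e₁)⟫ - ⟪y, Ω (Ω e₁)⟫ * ⟪x, e₁⟫) • z
          + (⟪z, e₁⟫ * ⟪y, Ω (Ω e₁)⟫ - ⟪z, Ω (Ω e₁)⟫ * ⟪y, e₁⟫) • x := by
  have hsym : ∀ a b : V, ⟪Ω (Ω a), b⟫ = ⟪a, Ω (Ω b)⟫ := by
    intro a b
    rw [hΩ, hΩ, neg_neg]
  have hswap : ∀ a b : V, (⟪a, Ω (Ω b)⟫ : ℝ) = ⟪b, Ω (Ω a)⟫ := by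
    intro a b
    rw [← hsym, real_inner_comm]
  simp only [wedge, ContinuousLinearMap.sub_apply, ContinuousLinearMap.smulRight_apply,
    innerSL_apply_apply, ContinuousLinearMap.add_apply, inner_sub_left, inner_smul_left,
    RCLike.star_def, conj_trivial]
  simp only [hsym]
  rw [hswap y x, hswap z x, hswap z y,
    real_inner_comm e₁ x, real_inner_comm e₁ y, real_inner_comm e₁ z,
    real_inner_comm y x, real_inner_comm z x, real_inner_comm z y]
  match_scalars <;> ring
end

section
/- Let Ω be a skew-symmetric endomorphism of ℝⁿ, e₁ a unit vector, and for y ⊥ e₁ set T_y = (1/2)((Ω e₁) ∧ y − e₁ ∧ (Ω y)). Then for x, y both orthogonal to e₁, the commutator satisfies [T_x, T_y] = (1/4)( −2⟨Ω, x ∧ y⟩ (e₁ ∧ Ω e₁) + ‖Ω e₁‖² (x ∧ y) + (Ω x) ∧ (Ω y) − e₁ ∧ ((x ∧ y) Ω² e₁) + e₁ ∧ (Ω (x ∧ y) Ω e₁) + ((x ∧ y) Ω e₁) ∧ (Ω e₁) ), where ⟨Ω, x ∧ y⟩ = ⟨Ω x, y⟩. -/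
open scoped RealInnerProductSpace

lemma wedge_apply {V : Type*} [NormedAddCommGroup V] [InnerProductSpace ℝ V]
    (x y w : V) : wedge x y w = ⟪x, w⟫ • y - ⟪y, w⟫ • x := by
  simp [wedge]

/-- For `Ω` skew-symmetric, `e₁` a unit vector and `x, y ⊥ e₁`, with
`T_x = (1/2)((Ω e₁) ∧ x − e₁ ∧ (Ω x))`, the commutator `[T_x, T_y]` equals
`(1/4)(−2⟨Ω x, y⟩ (e₁ ∧ Ω e₁) + ‖Ω e₁‖² (x ∧ y) + (Ω x) ∧ (Ω y) − e₁ ∧ ((x ∧ y) Ω² e₁)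
+ e₁ ∧ (Ω ((x ∧ y) Ω e₁)) + ((x ∧ y) Ω e₁) ∧ (Ω e₁))`. -/
theorem bracket_contorsion_contorsion {V : Type*} [NormedAddCommGroup V]
    [InnerProductSpace ℝ V] (Ω : V →L[ℝ] V) (hΩ : IsSkew Ω) (e₁ : V) (he : ‖e₁‖ = 1)
    (x y : V) (hx : ⟪x, e₁⟫ = 0) (hy : ⟪y, e₁⟫ = 0) :
    ((1/2 : ℝ) • (wedge (Ω e₁) x - wedge e₁ (Ω x))).comp
        ((1/2 : ℝ) • (wedge (Ω e₁) y - wedge e₁ (Ω y)))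
      - ((1/2 : ℝ) • (wedge (Ω e₁) y - wedge e₁ (Ω y))).comp
        ((1/2 : ℝ) • (wedge (Ω e₁) x - wedge e₁ (Ω x)))
      = (1/4 : ℝ) •
          ((-2 * ⟪Ω x, y⟫) • wedge e₁ (Ω e₁)
            + (‖Ω e₁‖ ^ 2) • wedge x y
            + wedge (Ω x) (Ω y)
            - wedge e₁ ((wedge x y) (Ω (Ω e₁)))
            + wedge e₁ (Ω ((wedge x y) (Ω e₁)))
            + wedge ((wedge x y) (Ω e₁)) (Ω e₁)) := by
  have hxe' : ⟪e₁, x⟫ = 0 := by rw [real_inner_comm]; exact hx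
  have hye' : ⟪e₁, y⟫ = 0 := by rw [real_inner_comm]; exact hy
  have hee : ⟪e₁, e₁⟫ = (1:ℝ) := by rw [real_inner_self_eq_norm_sq, he]; norm_num
  have hOe : ⟪Ω e₁, e₁⟫ = 0 := by
    have h := hΩ e₁ e₁; rw [real_inner_comm (Ω e₁) e₁] at h; linarith
  have hOe' : ⟪e₁, Ω e₁⟫ = 0 := by rw [real_inner_comm]; exact hOe
  have hyOe : ⟪y, Ω e₁⟫ = ⟪Ω e₁, y⟫ := real_inner_comm _ _
  have hxOe : ⟪x, Ω e₁⟫ = ⟪Ω e₁, x⟫ := real_inner_comm _ _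
  have heOy : ⟪e₁, Ω y⟫ = -⟪Ω e₁, y⟫ := by have h := hΩ e₁ y; linarith
  have heOx : ⟪e₁, Ω x⟫ = -⟪Ω e₁, x⟫ := by have h := hΩ e₁ x; linarith
  have hOye : ⟪Ω y, e₁⟫ = -⟪Ω e₁, y⟫ := by rw [real_inner_comm]; exact heOy
  have hOxe : ⟪Ω x, e₁⟫ = -⟪Ω e₁, x⟫ := by rw [real_inner_comm]; exact heOx
  have hyx : ⟪y, x⟫ = ⟪x, y⟫ := real_inner_comm _ _
  have hnorm : ‖Ω e₁‖ ^ 2 = ⟪Ω e₁, Ω e₁⟫ := (real_inner_self_eq_norm_sq _).symm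
  have hxOOe : ⟪x, Ω (Ω e₁)⟫ = -⟪Ω e₁, Ω x⟫ := by
    rw [real_inner_comm]; exact hΩ (Ω e₁) x
  have hyOOe : ⟪y, Ω (Ω e₁)⟫ = -⟪Ω e₁, Ω y⟫ := by
    rw [real_inner_comm]; exact hΩ (Ω e₁) y
  have hOxOe : ⟪Ω x, Ω e₁⟫ = ⟪Ω e₁, Ω x⟫ := real_inner_comm _ _
  have hOyOe : ⟪Ω y, Ω e₁⟫ = ⟪Ω e₁, Ω y⟫ := real_inner_comm _ _
  have hOyOx : ⟪Ω y, Ω x⟫ = ⟪Ω x, Ω y⟫ := real_inner_comm _ _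
  have hOyx : ⟪Ω y, x⟫ = -⟪Ω x, y⟫ := by rw [hΩ y x, real_inner_comm]
  have hxOy : ⟪x, Ω y⟫ = -⟪Ω x, y⟫ := by rw [real_inner_comm]; exact hOyx
  have hyOx : ⟪y, Ω x⟫ = ⟪Ω x, y⟫ := real_inner_comm _ _
  ext w
  simp only [ContinuousLinearMap.coe_comp', Function.comp_apply, ContinuousLinearMap.coe_smul',
    Pi.smul_apply, ContinuousLinearMap.coe_sub', Pi.sub_apply, ContinuousLinearMap.add_apply,
    ContinuousLinearMap.smul_apply, ContinuousLinearMap.sub_apply, wedge_apply, map_sub, map_smul,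
    inner_sub_left, inner_sub_right, real_inner_smul_left, real_inner_smul_right, smul_sub,
    smul_smul, smul_add, hx, hy, hxe', hye', hee, hOe, hOe', hyOe, hxOe, heOy, heOx, hOye, hOxe,
    hyx, hnorm, hxOOe, hyOOe, hOxOe, hOyOe, hOyOx, hOyx, hxOy, hyOx]
  match_scalars <;> ring
end
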